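/- arXiv:2512.04991 — 2 statements merged into one kernel-verified Lean document; each statement's English description precedes it below -/
import Mathlib

section
/- L/U constraints are monotone in parameter valuations: consider an atomic constraint c ⋈ Σᵢ αᵢ·pᵢ + d on a clock value c ∈ ℝ≥0, where the parameter index set is partitioned into lower-bound indices L and upper-bound indices U, ⋈ ∈ {≤, <} and αᵢ ≤ 0 for i ∈ L and αᵢ ≥ 0 for i ∈ U (or ⋈ ∈ {≥, >} with the inequalities on the αᵢ reversed). If the constraint holds under a parameter valuation v, then it also holds under every valuation v' with v'(pᵢ) ≤ v(pᵢ) for i ∈ L and v'(pᵢ) ≥ v(pᵢ) for i ∈ U. -/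
/-- Comparison operators `⋈ ∈ {<, ≤, ≥, >}` of an L/U atomic constraint. -/
inductive Cmp | lt | le | ge | gt

/-- Interpretation of a comparison operator over the reals. -/
def Cmp.eval : Cmp → ℝ → ℝ → Prop
  | .lt, a, b => a < b
  | .le, a, b => a ≤ b
  | .ge, a, b => a ≥ b
  | .gt, a, b => a > b

namespace Cmp

theorem eval_of_le_right {cmp : Cmp} (hcmp : cmp = .le ∨ cmp = .lt) {a b b' : ℝ}
    (hb : b ≤ b') (h : cmp.eval a b) : cmp.eval a b' := by
  rcases hcmp with rfl | rfl
  · exact le_trans h hb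
  · exact lt_of_lt_of_le h hb

theorem eval_of_ge_right {cmp : Cmp} (hcmp : cmp = .ge ∨ cmp = .gt) {a b b' : ℝ}
    (hb : b' ≤ b) (h : cmp.eval a b) : cmp.eval a b' := by
  rcases hcmp with rfl | rfl
  · exact le_trans hb h
  · exact lt_of_le_of_lt hb h

end Cmp

theorem Finset.sum_mul_le_sum_mul_of_sign_split {ι R : Type*} [Ring R] [PartialOrder R]
    [IsOrderedRing R] (s : Finset ι) (U : Set ι) {β w w' : ι → R}
    (hβL : ∀ i ∉ U, β i ≤ 0) (hβU : ∀ i ∈ U, 0 ≤ β i)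
    (hwL : ∀ i ∉ U, w' i ≤ w i) (hwU : ∀ i ∈ U, w i ≤ w' i) :
    ∑ i ∈ s, β i * w i ≤ ∑ i ∈ s, β i * w' i := by
  refine Finset.sum_le_sum fun i _ => ?_
  by_cases hi : i ∈ U
  · exact mul_le_mul_of_nonneg_left (hwU i hi) (hβU i hi)
  · exact mul_le_mul_of_nonpos_left (hwL i hi) (hβL i hi)

/-- L/U atomic constraints are monotone in parameter valuations: decreasing
lower-bound parameters (those not in `U`) and increasing upper-bound parameters
(those in `U`) preserves satisfaction. -/
theorem LU_atomic_mono {P : Type*} [Fintype P] (U : Set P) (c : NNReal)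
    (α : P → ℤ) (d : ℤ) (cmp : Cmp)
    (hLU : ((cmp = .le ∨ cmp = .lt) ∧ (∀ i ∉ U, α i ≤ 0) ∧ (∀ i ∈ U, 0 ≤ α i)) ∨
           ((cmp = .ge ∨ cmp = .gt) ∧ (∀ i ∉ U, 0 ≤ α i) ∧ (∀ i ∈ U, α i ≤ 0)))
    (v v' : P → ℕ)
    (hL : ∀ i ∉ U, v' i ≤ v i) (hU : ∀ i ∈ U, v i ≤ v' i)
    (h : cmp.eval (c : ℝ) (∑ i, (α i : ℝ) * (v i : ℝ) + (d : ℝ))) :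
    cmp.eval (c : ℝ) (∑ i, (α i : ℝ) * (v' i : ℝ) + (d : ℝ)) := by
  have hvL (i : P) (hi : i ∉ U) : (v' i : ℝ) ≤ v i := by exact_mod_cast hL i hi
  have hvU (i : P) (hi : i ∈ U) : (v i : ℝ) ≤ v' i := by exact_mod_cast hU i hi
  rcases hLU with ⟨hcmp, hαL, hαU⟩ | ⟨hcmp, hαL, hαU⟩
  · have hsum := Finset.univ.sum_mul_le_sum_mul_of_sign_split U
      (fun i hi => Int.cast_nonpos.mpr (hαL i hi)) (fun i hi => Int.cast_nonneg (hαU i hi))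
      hvL hvU
    exact Cmp.eval_of_le_right hcmp (add_le_add_left hsum _) h
  · -- Reversed signs: swap the roles of `v`, `v'` and of `U`, `Uᶜ`.
    have hsum := Finset.univ.sum_mul_le_sum_mul_of_sign_split Uᶜ
      (fun i hi => Int.cast_nonpos.mpr (hαU i (Set.notMem_compl_iff.mp hi)))
      (fun i hi => Int.cast_nonneg (hαL i hi))
      (fun i hi => hvU i (Set.notMem_compl_iff.mp hi)) hvL
    exact Cmp.eval_of_ge_right hcmp (add_le_add_left hsum _) h
end

section
/- Copycat property of disjunctive timed networks: let A be a guarded timed automaton and suppose a configuration c = ((ℓ₁, μ₁), …, (ℓₙ, μₙ)) is reachable in the network A^n. Then for every index i ∈ {1, …, n}, the configuration ((ℓ₁, μ₁), …, (ℓₙ, μₙ), (ℓᵢ, μᵢ)) is reachable in the network A^{n+1}; that is, process n+1 can exactly duplicate the behaviour of process i. -/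
open Classical in
/-- Reset of a clock valuation. -/
noncomputable def reset {X : Type*} (μ : X → NNReal) (R : Set X) : X → NNReal :=
  fun x => if x ∈ R then 0 else μ x

/-- A guarded timed automaton with locations `L`, clocks `X` and actions `Act`:
an initial location, an invariant per location, and edges carrying a clock guard,
a location guard (`none` means `⊤`), an action and a reset set. -/
structure GTA (L X Act : Type*) where
  init : L
  inv : L → (X → NNReal) → Prop
  edges : Set (L × ((X → NNReal) → Prop) × Option L × Act × Set X × L)

namespace GTA

variable {L X Act : Type*}

/-- A configuration of the network `A^n`. -/
abbrev Config (L X : Type*) (n : ℕ) := Fin n → L × (X → NNReal)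

/-- Delay transition of the network: all clocks advance by `d`, and all
invariants hold throughout the delay. -/
def DelayStep (A : GTA L X Act) {n : ℕ} (c : Config L X n) (d : NNReal)
    (c' : Config L X n) : Prop :=
  (∀ i, (c' i).1 = (c i).1 ∧ (c' i).2 = fun x => (c i).2 x + d) ∧
  (∀ i, ∀ d' : NNReal, d' ≤ d → A.inv (c i).1 (fun x => (c i).2 x + d'))

/-- Discrete transition of the network: one process takes an edge whose clock
guard holds and whose location guard is `⊤` or occupied by another process;
the other processes are unchanged. -/
def DiscStep (A : GTA L X Act) {n : ℕ} (c c' : Config L X n) : Prop :=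
  ∃ i : Fin n, ∃ g γ a R ℓ',
    ((c i).1, g, γ, a, R, ℓ') ∈ A.edges ∧
    g ((c i).2) ∧
    A.inv (c i).1 ((c i).2) ∧
    (γ = none ∨ ∃ j, j ≠ i ∧ γ = some ((c j).1)) ∧
    (c' i).1 = ℓ' ∧ (c' i).2 = reset ((c i).2) R ∧
    A.inv ℓ' ((c' i).2) ∧
    ∀ j, j ≠ i → c' j = c j

/-- Reachability of a configuration in the network `A^n`. -/
inductive Reach (A : GTA L X Act) {n : ℕ} : Config L X n → Prop
  | init : Reach A (fun _ => (A.init, fun _ => 0))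
  | delay {c d c'} : Reach A c → A.DelayStep c d c' → Reach A c'
  | disc {c c'} : Reach A c → A.DiscStep c c' → Reach A c'

end GTA


/-!
Induct on the computation of `A^n`. The extra process `n + 1` stays in the state of process `i`:
delay transitions act uniformly on all processes, so they lift to any reindexing of a
configuration; a discrete transition of a process other than `i` is replayed with the copy idle,
and one of process `i` is replayed and then immediately repeated by the copy. The location guard
of the repeated transition is still witnessed, since its witness `j ≠ i` has not moved and is
distinct from the copy.
-/

theorem Fin.snoc_self_eq_comp {α : Type*} {n : ℕ} (c : Fin n → α) (i : Fin n) :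
    Fin.snoc c (c i) = c ∘ Fin.snoc (α := fun _ => Fin n) id i :=
  (Fin.comp_snoc c id i).symm

namespace GTA

variable {L X Act : Type*} {n m : ℕ}

def LocalStep (A : GTA L X Act) (p : L × (X → NNReal)) (γ : Option L)
    (q : L × (X → NNReal)) : Prop :=
  ∃ g a R, (p.1, g, γ, a, R, q.1) ∈ A.edges ∧ g p.2 ∧ A.inv p.1 p.2 ∧
    q.2 = reset p.2 R ∧ A.inv q.1 q.2

def LocGuardHolds (c : Config L X n) (i : Fin n) (γ : Option L) : Prop :=
  γ = none ∨ ∃ j, j ≠ i ∧ γ = some (c j).1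

theorem LocGuardHolds.of_comp {c : Config L X n} {d : Config L X m} {i : Fin n} {i' : Fin m}
    {γ : Option L} (f : Fin n → Fin m) (hf : ∀ k, k ≠ i → f k ≠ i' ∧ (d (f k)).1 = (c k).1)
    (h : LocGuardHolds c i γ) : LocGuardHolds d i' γ := by
  rcases h with h | ⟨k, hk, hγ⟩
  · exact Or.inl h
  · exact Or.inr ⟨f k, (hf k hk).1, by rw [hγ, (hf k hk).2]⟩

theorem discStep_iff (A : GTA L X Act) {c c' : Config L X n} :
    A.DiscStep c c' ↔
      ∃ i γ s, A.LocalStep (c i) γ s ∧ LocGuardHolds c i γ ∧ c' = Function.update c i s := by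
  constructor
  · rintro ⟨i, g, γ, a, R, ℓ', hedge, hg, hinv, hγ, rfl, hreset, hinv', hrest⟩
    refine ⟨i, γ, c' i, ⟨g, a, R, hedge, hg, hinv, hreset, hinv'⟩, hγ, ?_⟩
    ext1 j
    rcases eq_or_ne j i with rfl | hj
    · simp
    · simp [hj, hrest j hj]
  · rintro ⟨i, γ, s, ⟨g, a, R, hedge, hg, hinv, hreset, hinv'⟩, hγ, rfl⟩
    exact ⟨i, g, γ, a, R, s.1, by simpa using hedge, hg, hinv, hγ, by simp, by simpa using hreset,
      by simpa using hinv', fun j hj => Function.update_of_ne hj _ _⟩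

theorem DelayStep.comp {A : GTA L X Act} {c c' : Config L X n} {d : NNReal}
    (h : A.DelayStep c d c') (f : Fin m → Fin n) : A.DelayStep (c ∘ f) d (c' ∘ f) :=
  ⟨fun k => h.1 (f k), fun k => h.2 (f k)⟩

theorem discStep_snoc_castSucc {A : GTA L X Act} {c : Config L X n} {i : Fin n} {γ : Option L}
    {s p : L × (X → NNReal)} (hs : A.LocalStep (c i) γ s) (hγ : LocGuardHolds c i γ) :
    A.DiscStep (Fin.snoc c p) (Fin.snoc (Function.update c i s) p) := by
  rw [Fin.snoc_update, discStep_iff]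
  refine ⟨i.castSucc, γ, s, by simpa using hs, hγ.of_comp Fin.castSucc fun k hk => ?_, rfl⟩
  simp [hk]

theorem discStep_snoc_last {A : GTA L X Act} {c : Config L X n} {i : Fin n} {γ : Option L}
    {s : L × (X → NNReal)} (hs : A.LocalStep (c i) γ s) (hγ : LocGuardHolds c i γ) :
    A.DiscStep (Fin.snoc (Function.update c i s) (c i)) (Fin.snoc (Function.update c i s) s) := by
  rw [discStep_iff]
  refine ⟨Fin.last n, γ, s, by simpa using hs, hγ.of_comp Fin.castSucc fun k hk => ?_,
    (Fin.update_snoc_last _ _ _).symm⟩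
  simp [hk, (Fin.castSucc_lt_last k).ne]

end GTA

/-- Copycat property of disjunctive timed networks: if `c` is reachable in `A^n`
then, for any process `i`, the configuration obtained by appending a fresh process
in the exact state of process `i` is reachable in `A^{n+1}`. -/
theorem copycat {L X Act : Type*} (A : GTA L X Act) {n : ℕ}
    (c : GTA.Config L X n) (h : A.Reach c) (i : Fin n) :
    A.Reach (Fin.snoc c (c i)) := by
  induction h with
  | init => rw [Fin.snoc_self_eq_comp _ i]; exact GTA.Reach.init
  | delay _ hd ih =>
    rw [Fin.snoc_self_eq_comp] at ih ⊢
    exact ih.delay (hd.comp _)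
  | disc _ hs ih =>
    obtain ⟨j, γ, s, hloc, hγ, rfl⟩ := (GTA.discStep_iff A).1 hs
    have hmove := ih.disc (GTA.discStep_snoc_castSucc hloc hγ)
    rcases eq_or_ne j i with rfl | hji
    · simpa using hmove.disc (GTA.discStep_snoc_last hloc hγ)
    · simpa [Function.update_of_ne hji.symm] using hmove
end
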